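/- arXiv:0805.4180 — 7 statements merged into one kernel-verified Lean document; each statement's English description precedes it below -/
import Mathlib

section
/- The set of Baxter permutations of size n is closed under inversion: if π is a Baxter permutation of {1,...,n}, then π⁻¹ is also a Baxter permutation. -/
/-!
An occurrence of a forbidden pattern in `π⁻¹` is, read through `π`, an occurrence of
`3142` or `2413` in `π` in which the entries playing `3` and `2` differ by one in value.
Between the `1` and the `4` (resp. the `4` and the `1`) the values of `π` cross the
value of the `3` (resp. the `2`) at some pair of adjacent positions, and since no value lies
strictly between those of the `3` and the `2`, that adjacent pair together with them is a
forbidden pattern of `π`.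
-/

def IsBaxter {n : ℕ} (π : Equiv.Perm (Fin n)) : Prop :=
  ¬ ∃ i j k : Fin n, ∃ hj : (j : ℕ) + 1 < n,
    i < j ∧ j < k ∧
      ((π ⟨(j : ℕ) + 1, hj⟩ < π i ∧ π i < π k ∧ π k < π j) ∨
       (π j < π k ∧ π k < π i ∧ π i < π ⟨(j : ℕ) + 1, hj⟩))

open OrderDual

lemma Nat.exists_mem_Ico_and_not_succ {P : ℕ → Prop} {b c : ℕ} (hbc : b ≤ c) (hb : P b)
    (hc : ¬ P c) : ∃ p, b ≤ p ∧ p < c ∧ P p ∧ ¬ P (p + 1) := by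
  induction c, hbc using Nat.le_induction with
  | base => exact absurd hb hc
  | succ c hbc ih =>
    by_cases hPc : P c
    · exact ⟨c, hbc, c.lt_succ_self, hPc, hc⟩
    · obtain ⟨p, hbp, hpc, hPp, hPp'⟩ := ih hPc
      exact ⟨p, hbp, hpc.trans c.lt_succ_self, hPp, hPp'⟩

section AdjacentCrossing

variable {α : Type*} [LinearOrder α] {n : ℕ} {f : Fin n → α} {a b c d : Fin n}

lemma exists_adjacent_lt_lt_lt_of_covBy (hf : Function.Injective f) (hab : a < b)
    (hbc : b < c) (hcd : c < d) (hbd : f b < f d) (hda : f d ⋖ f a) (hac : f a < f c) :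
    ∃ (p : Fin n) (hp : (p : ℕ) + 1 < n),
      a < p ∧ p < d ∧ f p < f d ∧ f d < f a ∧ f a < f ⟨p + 1, hp⟩ := by
  obtain ⟨p, hbp, hpc, ⟨hpn, hpa⟩, hp'a⟩ :=
    Nat.exists_mem_Ico_and_not_succ (P := fun q ↦ ∃ hq : q < n, f ⟨q, hq⟩ < f a) hbc.le
      ⟨b.isLt, hbd.trans hda.lt⟩ fun ⟨_, hca⟩ ↦ hca.not_gt hac
  have hab' : (a : ℕ) < b := hab
  have hcd' : (c : ℕ) < d := hcd
  have hp'n : p + 1 < n := by omega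
  refine ⟨⟨p, hpn⟩, hp'n, Fin.lt_def.2 (show (a : ℕ) < p by omega),
    Fin.lt_def.2 (show p < (d : ℕ) by omega), ?_, hda.lt, ?_⟩
  · refine (hda.le_of_lt hpa).lt_of_ne fun h ↦ ?_
    have hpd : p = d := congrArg Fin.val (hf h)
    omega
  · refine (le_of_not_gt fun h ↦ hp'a ⟨hp'n, h⟩).lt_of_ne fun h ↦ ?_
    have hap : (a : ℕ) = p + 1 := congrArg Fin.val (hf h)
    omega

lemma exists_adjacent_gt_gt_gt_of_covBy (hf : Function.Injective f) (hab : a < b)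
    (hbc : b < c) (hcd : c < d) (hdb : f d < f b) (had : f a ⋖ f d) (hca : f c < f a) :
    ∃ (p : Fin n) (hp : (p : ℕ) + 1 < n),
      a < p ∧ p < d ∧ f ⟨p + 1, hp⟩ < f a ∧ f a < f d ∧ f d < f p := by
  obtain ⟨p, hp, hap, hpd, h₁, h₂, h₃⟩ :=
    exists_adjacent_lt_lt_lt_of_covBy (f := toDual ∘ f) hf hab hbc hcd hdb had.toDual hca
  exact ⟨p, hp, hap, hpd, h₃, h₂, h₁⟩

end AdjacentCrossing

theorem baxter_closed_under_inversion {n : ℕ} (π : Equiv.Perm (Fin n))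
    (h : IsBaxter π) : IsBaxter π⁻¹ := by
  rintro ⟨i, j, k, hj, hij, hjk, hpat⟩
  set j' : Fin n := ⟨j + 1, hj⟩
  have hcov : j ⋖ j' := Fin.covBy_iff.2 (Nat.covBy_iff_add_one_eq.2 rfl)
  have hj'k : j' ≠ k → j' < k := (Fin.le_def.2 (Nat.succ_le_of_lt hjk)).lt_of_ne
  rcases hpat with ⟨h₁, h₂, h₃⟩ | ⟨h₁, h₂, h₃⟩
  · obtain ⟨p, hp, hap, hpd, hpat⟩ := exists_adjacent_lt_lt_lt_of_covBy (f := π) π.injective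
      h₁ h₂ h₃ (by simpa using hij) (by simpa using hcov)
      (by simpa using hj'k fun e ↦ (h₁.trans h₂).ne (congrArg _ e))
    exact h ⟨_, p, _, hp, hap, hpd, Or.inr hpat⟩
  · obtain ⟨p, hp, hap, hpd, hpat⟩ := exists_adjacent_gt_gt_gt_of_covBy (f := π) π.injective
      h₁ h₂ h₃ (by simpa using hj'k fun e ↦ (h₂.trans h₃).ne' (congrArg _ e))
      (by simpa using hcov) (by simpa using hij)
    exact h ⟨_, p, _, hp, hap, hpd, Or.inl hpat⟩
end

section
/- A permutation is Baxter if and only if it avoids both barred patterns 25̄314 and 41̄352; that is, π is Baxter iff every occurrence of the pattern 2413 in π extends to an occurrence of 25314 (with the '5' inserted between positions of '2' and '4' in value position), and every occurrence of 3142 extends to an occurrence of 41352. -/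
/-- Every occurrence of 2413 extends to an occurrence of 25314: there is an
extra point, positionally between the '4' and the '1', whose value lies
strictly between the values of the '2' and the '3'. -/
def Avoids25bar314 {n : ℕ} (π : Equiv.Perm (Fin n)) : Prop :=
  ∀ i₁ i₂ i₃ i₄ : Fin n, i₁ < i₂ → i₂ < i₃ → i₃ < i₄ →
    π i₃ < π i₁ → π i₁ < π i₄ → π i₄ < π i₂ →
    ∃ m : Fin n, i₂ < m ∧ m < i₃ ∧ π i₁ < π m ∧ π m < π i₄

/-- Every occurrence of 3142 extends to an occurrence of 41352: there is an
extra point, positionally between the '1' and the '4', whose value lies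
strictly between the values of the '2' and the '3'. -/
def Avoids41bar352 {n : ℕ} (π : Equiv.Perm (Fin n)) : Prop :=
  ∀ i₁ i₂ i₃ i₄ : Fin n, i₁ < i₂ → i₂ < i₃ → i₃ < i₄ →
    π i₂ < π i₄ → π i₄ < π i₁ → π i₁ < π i₃ →
    ∃ m : Fin n, i₂ < m ∧ m < i₃ ∧ π i₄ < π m ∧ π m < π i₁

/-- Walking lemma: if `a` satisfies `P`, `b` satisfies `Q`, and every point strictly
between satisfies `P` or `Q`, then some adjacent pair switches from `P` to `Q`. -/
lemma exists_step (P Q : ℕ → Prop) :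
    ∀ d a b, b - a ≤ d → a < b → P a → Q b →
    (∀ t, a < t → t < b → P t ∨ Q t) →
    ∃ j, a ≤ j ∧ j + 1 ≤ b ∧ P j ∧ Q (j + 1) := by
  intro d
  induction d with
  | zero => intro a b h hab _ _ _; omega
  | succ d ih =>
    intro a b h hab hPa hQb hd
    by_cases hq : Q (a + 1)
    · exact ⟨a, le_refl a, hab, hPa, hq⟩
    · have hne : a + 1 < b := by
        rcases Nat.lt_or_ge (a + 1) b with h' | h'
        · exact h'
        · have hb : b = a + 1 := by omega
          exact absurd (hb ▸ hQb) hq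
      have hP1 : P (a + 1) := by
        rcases hd (a + 1) (by omega) hne with h' | h'
        · exact h'
        · exact absurd h' hq
      obtain ⟨j, hj1, hj2, hj3, hj4⟩ := ih (a + 1) b (by omega) hne hP1 hQb
        (fun t ht1 ht2 => hd t (by omega) ht2)
      exact ⟨j, by omega, hj2, hj3, hj4⟩

theorem baxter_iff_barred_patterns {n : ℕ} (π : Equiv.Perm (Fin n)) :
    IsBaxter π ↔ Avoids25bar314 π ∧ Avoids41bar352 π := by
  constructor
  · intro hB
    constructor
    · -- Avoids25bar314
      intro i₁ i₂ i₃ i₄ h12 h23 h34 hv31 hv14 hv42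
      by_contra hno
      push_neg at hno
      -- dichotomy on intermediate points
      have hd : ∀ t, (i₂ : ℕ) < t → t < (i₃ : ℕ) →
          (∀ ht : t < n, π i₄ < π ⟨t, ht⟩) ∨ (∀ ht : t < n, π ⟨t, ht⟩ < π i₁) := by
        intro t ht2 ht3
        have htn : t < n := lt_trans ht3 i₃.isLt
        set m : Fin n := ⟨t, htn⟩ with hm
        rcases lt_trichotomy (π m) (π i₁) with h | h | h
        · right; intro ht; exact h
        · exfalso
          have hmi : m = i₁ := π.injective h
          have hlt : (i₁ : ℕ) < t := lt_trans (Fin.lt_iff_val_lt_val.mp h12) ht2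
          have := congrArg Fin.val hmi
          simp [hm] at this
          omega
        · have h4 : π i₄ ≤ π m := by
            by_contra hlt
            push_neg at hlt
            exact absurd (hno m ht2 ht3 h) (not_le.mpr hlt)
          have hne : π m ≠ π i₄ := by
            intro he
            have : m = i₄ := π.injective he
            have ht4 : t < (i₄ : ℕ) := lt_trans ht3 h34
            rw [this] at hm
            have := congrArg Fin.val hm
            simp at this
            omega
          left; intro ht
          exact lt_of_le_of_ne h4 (fun he => hne he.symm)
      obtain ⟨j, hj1, hj2, hj3, hj4⟩ :=
        exists_step (fun t => ∀ ht : t < n, π i₄ < π ⟨t, ht⟩)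
          (fun t => ∀ ht : t < n, π ⟨t, ht⟩ < π i₁)
          ((i₃ : ℕ) - (i₂ : ℕ)) (i₂ : ℕ) (i₃ : ℕ) (le_refl _) h23
          (fun ht => by simpa using hv42)
          (fun ht => by simpa using hv31) hd
      have hjn : j < n := lt_of_lt_of_le (Nat.lt_succ_self j) (le_trans hj2 (le_of_lt i₃.isLt))
      have hj1n : j + 1 < n := lt_of_le_of_lt hj2 i₃.isLt
      apply hB
      refine ⟨i₁, ⟨j, hjn⟩, i₄, hj1n, ?_, ?_, Or.inl ⟨hj4 hj1n, hv14, hj3 hjn⟩⟩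
      · have h12' := Fin.lt_iff_val_lt_val.mp h12
        have h23' := Fin.lt_iff_val_lt_val.mp h23
        exact Fin.lt_iff_val_lt_val.mpr (by simp; omega)
      · have h34' := Fin.lt_iff_val_lt_val.mp h34
        exact Fin.lt_iff_val_lt_val.mpr (by simp; omega)
    · -- Avoids41bar352
      intro i₁ i₂ i₃ i₄ h12 h23 h34 hv24 hv41 hv13
      by_contra hno
      push_neg at hno
      have hd : ∀ t, (i₂ : ℕ) < t → t < (i₃ : ℕ) →
          (∀ ht : t < n, π ⟨t, ht⟩ < π i₄) ∨ (∀ ht : t < n, π i₁ < π ⟨t, ht⟩) := by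
        intro t ht2 ht3
        have htn : t < n := lt_trans ht3 i₃.isLt
        set m : Fin n := ⟨t, htn⟩ with hm
        rcases lt_trichotomy (π m) (π i₄) with h | h | h
        · left; intro ht; exact h
        · exfalso
          have hmi : m = i₄ := π.injective h
          have ht4 : t < (i₄ : ℕ) := lt_trans ht3 h34
          rw [hmi] at hm
          have := congrArg Fin.val hm
          simp at this
          omega
        · have h1 : π i₁ ≤ π m := by
            by_contra hlt
            push_neg at hlt
            exact absurd (hno m ht2 ht3 h) (not_le.mpr hlt)
          have hne : π m ≠ π i₁ := by
            intro he
            have hmi : m = i₁ := π.injective he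
            have : (i₁ : ℕ) < t := lt_trans h12 ht2
            rw [hmi] at hm
            have := congrArg Fin.val hm
            simp at this
            omega
          right; intro ht
          exact lt_of_le_of_ne h1 (fun he => hne he.symm)
      obtain ⟨j, hj1, hj2, hj3, hj4⟩ :=
        exists_step (fun t => ∀ ht : t < n, π ⟨t, ht⟩ < π i₄)
          (fun t => ∀ ht : t < n, π i₁ < π ⟨t, ht⟩)
          ((i₃ : ℕ) - (i₂ : ℕ)) (i₂ : ℕ) (i₃ : ℕ) (le_refl _) h23
          (fun ht => by simpa using hv24)
          (fun ht => by simpa using hv13) hd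
      have hjn : j < n := lt_of_lt_of_le (Nat.lt_succ_self j) (le_trans hj2 (le_of_lt i₃.isLt))
      have hj1n : j + 1 < n := lt_of_le_of_lt hj2 i₃.isLt
      apply hB
      refine ⟨i₁, ⟨j, hjn⟩, i₄, hj1n, ?_, ?_, Or.inr ⟨hj3 hjn, hv41, hj4 hj1n⟩⟩
      · have h12' := Fin.lt_iff_val_lt_val.mp h12
        have h23' := Fin.lt_iff_val_lt_val.mp h23
        exact Fin.lt_iff_val_lt_val.mpr (by simp; omega)
      · have h34' := Fin.lt_iff_val_lt_val.mp h34
        exact Fin.lt_iff_val_lt_val.mpr (by simp; omega)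
  · rintro ⟨h25, h41⟩ ⟨i, j, k, hj, hij, hjk, hpat⟩
    have hj1 : j < (⟨(j : ℕ) + 1, hj⟩ : Fin n) := by
      simp [Fin.lt_iff_val_lt_val]
    rcases hpat with ⟨h1, h2, h3⟩ | ⟨h1, h2, h3⟩
    · -- 2413 occurrence at i, j, j+1, k
      have hjk1 : (⟨(j : ℕ) + 1, hj⟩ : Fin n) < k := by
        rcases lt_trichotomy (⟨(j : ℕ) + 1, hj⟩ : Fin n) k with h | h | h
        · exact h
        · exfalso; rw [h] at h1; exact absurd (lt_trans h1 h2) (lt_irrefl _)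
        · exfalso
          have hk : (k : ℕ) < (j : ℕ) + 1 := Fin.lt_iff_val_lt_val.mp h
          have := Fin.lt_iff_val_lt_val.mp hjk
          omega
      obtain ⟨m, hm1, hm2, _, _⟩ := h25 i j ⟨(j : ℕ) + 1, hj⟩ k hij hj1 hjk1 h1 h2 h3
      have hv1 : (j : ℕ) < (m : ℕ) := Fin.lt_iff_val_lt_val.mp hm1
      have hv2 : (m : ℕ) < (j : ℕ) + 1 := Fin.lt_iff_val_lt_val.mp hm2
      omega
    · -- 3142 occurrence at i, j, j+1, k
      have hjk1 : (⟨(j : ℕ) + 1, hj⟩ : Fin n) < k := by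
        rcases lt_trichotomy (⟨(j : ℕ) + 1, hj⟩ : Fin n) k with h | h | h
        · exact h
        · exfalso; rw [h] at h3; exact absurd (lt_trans h2 h3) (lt_irrefl _)
        · exfalso
          have hk : (k : ℕ) < (j : ℕ) + 1 := Fin.lt_iff_val_lt_val.mp h
          have := Fin.lt_iff_val_lt_val.mp hjk
          omega
      obtain ⟨m, hm1, hm2, _, _⟩ := h41 i j ⟨(j : ℕ) + 1, hj⟩ k hij hj1 hjk1 h1 h2 h3
      have hv1 : (j : ℕ) < (m : ℕ) := Fin.lt_iff_val_lt_val.mp hm1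
      have hv2 : (m : ℕ) < (j : ℕ) + 1 := Fin.lt_iff_val_lt_val.mp hm2
      omega
end

section
/- Let π be a Baxter permutation of {1,...,n} with an ascent at position a (i.e., π(a) < π(a+1)), and let ℓ_a = max{π(i) : i ≤ a and π(i) < π(a+1)}. Then for every i > a with π(i) > π(a), one has π(i) > ℓ_a. -/
theorem ascent_max_below {n : ℕ} (π : Equiv.Perm (Fin n)) (hπ : IsBaxter π)
    (a : Fin n) (ha : (a : ℕ) + 1 < n) (hasc : π a < π ⟨(a : ℕ) + 1, ha⟩)
    (ℓa : Fin n)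
    (hmem : ∃ i : Fin n, i ≤ a ∧ π i < π ⟨(a : ℕ) + 1, ha⟩ ∧ π i = ℓa)
    (hmax : ∀ i : Fin n, i ≤ a → π i < π ⟨(a : ℕ) + 1, ha⟩ → π i ≤ ℓa) :
    ∀ i : Fin n, a < i → π a < π i → ℓa < π i := by
  intro i hai hpi
  by_contra hle
  push_neg at hle
  obtain ⟨i₀, hi₀a, hi₀lt, hi₀eq⟩ := hmem
  -- π i ≠ ℓa, else i = i₀ ≤ a contradicting a < i
  have hne : π i ≠ ℓa := by
    intro h
    have : i = i₀ := π.injective (h.trans hi₀eq.symm)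
    exact absurd (this ▸ hai) (not_lt.mpr hi₀a)
  have hlt : π i < π i₀ := hi₀eq ▸ lt_of_le_of_ne hle hne
  -- i₀ ≠ a since π a < π i < π i₀
  have hi₀a' : i₀ < a := by
    rcases lt_or_eq_of_le hi₀a with h | h
    · exact h
    · exact absurd (h ▸ hlt) (not_lt.mpr (le_of_lt hpi))
  exact hπ ⟨i₀, a, i, ha, hi₀a', hai, Or.inr ⟨hpi, hlt, hi₀lt⟩⟩
end

section
/- Let σ be a Baxter permutation of size n. A permutation π of size n+1 obtained from σ by inserting the value n+1 at some position is Baxter if and only if the insertion occurs either immediately before a left-to-right maximum of σ or immediately after a right-to-left maximum of σ. -/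
/-- The permutation of size n+1 obtained from σ by inserting the (new maximal)
value n+1 at position p: it takes the maximal value at position p, and the
values of σ, in order, at the remaining positions. -/
def insertMax {n : ℕ} (σ : Equiv.Perm (Fin n)) (p : Fin (n + 1)) :
    Equiv.Perm (Fin (n + 1)) :=
  (finSuccEquiv' p).trans ((Equiv.optionCongr σ).trans (finSuccEquiv' (Fin.last n)).symm)

/-- σ(q) is a left-to-right maximum. -/
def IsLRMax {n : ℕ} (σ : Equiv.Perm (Fin n)) (q : Fin n) : Prop :=
  ∀ j : Fin n, j < q → σ j < σ q

/-- σ(q) is a right-to-left maximum. -/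
def IsRLMax {n : ℕ} (σ : Equiv.Perm (Fin n)) (q : Fin n) : Prop :=
  ∀ j : Fin n, q < j → σ j < σ q

namespace InsertBaxterAux

variable {n : ℕ}

lemma succAbove_coe (p : Fin (n+1)) (t : Fin n) :
    ((p.succAbove t : Fin (n+1)) : ℕ) = if (t:ℕ) < (p:ℕ) then (t:ℕ) else (t:ℕ)+1 := by
  by_cases h : (t:ℕ) < (p:ℕ)
  · rw [Fin.succAbove_of_castSucc_lt p t (by simpa [Fin.lt_def] using h)]; simp [h]
  · rw [Fin.succAbove_of_le_castSucc p t (by simpa [Fin.le_def] using Nat.le_of_not_lt h)]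
    simp [h]

lemma insertMax_self (σ : Equiv.Perm (Fin n)) (p : Fin (n+1)) :
    insertMax σ p p = Fin.last n := by
  simp [insertMax, finSuccEquiv'_at]

lemma insertMax_succAbove (σ : Equiv.Perm (Fin n)) (p : Fin (n+1)) (t : Fin n) :
    insertMax σ p (p.succAbove t) = (σ t).castSucc := by
  simp [insertMax, finSuccEquiv'_succAbove, finSuccEquiv'_symm_some, Fin.succAbove_last]

lemma apply_low (σ : Equiv.Perm (Fin n)) (p : Fin (n+1)) (x : Fin (n+1)) (t : Fin n)
    (h1 : (x:ℕ) = (t:ℕ)) (h2 : (t:ℕ) < (p:ℕ)) :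
    insertMax σ p x = (σ t).castSucc := by
  have hx : x = p.succAbove t := Fin.ext (by rw [succAbove_coe, if_pos h2, h1])
  rw [hx, insertMax_succAbove]

lemma apply_high (σ : Equiv.Perm (Fin n)) (p : Fin (n+1)) (x : Fin (n+1)) (t : Fin n)
    (h1 : (x:ℕ) = (t:ℕ)+1) (h2 : (p:ℕ) ≤ (t:ℕ)) :
    insertMax σ p x = (σ t).castSucc := by
  have hx : x = p.succAbove t := Fin.ext (by rw [succAbove_coe, if_neg (by omega), h1])
  rw [hx, insertMax_succAbove]

lemma not_isBaxter_of {m : ℕ} (π : Equiv.Perm (Fin m)) (i j k : ℕ)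
    (hi : i < m) (hj0 : j < m) (hj : j + 1 < m) (hk : k < m)
    (hij : i < j) (hjk : j < k)
    (hpat : (π ⟨j+1, hj⟩ < π ⟨i, hi⟩ ∧ π ⟨i, hi⟩ < π ⟨k, hk⟩ ∧ π ⟨k, hk⟩ < π ⟨j, hj0⟩) ∨
            (π ⟨j, hj0⟩ < π ⟨k, hk⟩ ∧ π ⟨k, hk⟩ < π ⟨i, hi⟩ ∧ π ⟨i, hi⟩ < π ⟨j+1, hj⟩)) :
    ¬ IsBaxter π :=
  fun hb => hb ⟨⟨i, hi⟩, ⟨j, hj0⟩, ⟨k, hk⟩, hj, Fin.mk_lt_mk.mpr hij, Fin.mk_lt_mk.mpr hjk, hpat⟩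

def dd (p x : ℕ) : ℕ := if x < p then x else x - 1

lemma dd_lt {p x m : ℕ} (hp : p ≤ m) (hx : x ≤ m) (hxp : x ≠ p) : dd p x < m := by
  unfold dd; split <;> omega

lemma dd_mono {p x y : ℕ} (hx : x ≠ p) (hxy : x < y) (hy : y ≠ p) : dd p x < dd p y := by
  unfold dd; split <;> split <;> omega

lemma dd_adj {p x : ℕ} (hx : x ≠ p) (h1 : x + 1 ≠ p) : dd p (x+1) = dd p x + 1 := by
  unfold dd; split <;> split <;> omega

lemma apply_dd (σ : Equiv.Perm (Fin n)) (p : Fin (n+1)) (x : Fin (n+1))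
    (hxp : (x:ℕ) ≠ (p:ℕ)) (hb : dd (p:ℕ) (x:ℕ) < n) :
    insertMax σ p x = (σ ⟨dd (p:ℕ) (x:ℕ), hb⟩).castSucc := by
  by_cases h : (x:ℕ) < (p:ℕ)
  · refine apply_low σ p x _ ?_ ?_ <;> simp only [dd] <;> rw [if_pos h]
    exact h
  · refine apply_high σ p x _ ?_ ?_ <;> simp only [dd] <;> rw [if_neg h] <;> omega

lemma descend (σ : Equiv.Perm (Fin n)) (p : Fin (n+1)) (i j k : Fin (n+1))
    (hj : (j:ℕ)+1 < n+1)
    (hip : (i:ℕ) ≠ (p:ℕ)) (hjp : (j:ℕ) ≠ (p:ℕ)) (hj1p : (j:ℕ)+1 ≠ (p:ℕ))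
    (hkp : (k:ℕ) ≠ (p:ℕ)) (hij : (i:ℕ) < (j:ℕ)) (hjk : (j:ℕ) < (k:ℕ)) :
    ∃ (i' j' k' : Fin n) (hj' : (j':ℕ)+1 < n), (i':ℕ) < (j':ℕ) ∧ (j':ℕ) < (k':ℕ) ∧
      insertMax σ p i = (σ i').castSucc ∧ insertMax σ p j = (σ j').castSucc ∧
      insertMax σ p ⟨(j:ℕ)+1, hj⟩ = (σ ⟨(j':ℕ)+1, hj'⟩).castSucc ∧
      insertMax σ p k = (σ k').castSucc := by
  have hpn : (p:ℕ) ≤ n := by have := p.isLt; omega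
  have hin : (i:ℕ) ≤ n := by have := i.isLt; omega
  have hjn : (j:ℕ) ≤ n := by omega
  have hkn : (k:ℕ) ≤ n := by have := k.isLt; omega
  have hbi : dd (p:ℕ) (i:ℕ) < n := dd_lt hpn hin hip
  have hbj : dd (p:ℕ) (j:ℕ) < n := dd_lt hpn hjn hjp
  have hbk : dd (p:ℕ) (k:ℕ) < n := dd_lt hpn hkn hkp
  have hbj1 : dd (p:ℕ) ((j:ℕ)+1) < n := dd_lt hpn (by omega) hj1p
  have hadj : dd (p:ℕ) ((j:ℕ)+1) = dd (p:ℕ) (j:ℕ) + 1 := dd_adj hjp hj1p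
  have hj' : dd (p:ℕ) (j:ℕ) + 1 < n := by omega
  refine ⟨⟨dd (p:ℕ) (i:ℕ), hbi⟩, ⟨dd (p:ℕ) (j:ℕ), hbj⟩, ⟨dd (p:ℕ) (k:ℕ), hbk⟩, hj',
    dd_mono hip hij hjp, dd_mono hjp hjk hkp,
    apply_dd σ p i hip hbi, apply_dd σ p j hjp hbj, ?_, apply_dd σ p k hkp hbk⟩
  have e : (⟨dd (p:ℕ) (j:ℕ) + 1, hj'⟩ : Fin n) = ⟨dd (p:ℕ) ((j:ℕ)+1), hbj1⟩ :=
    Fin.ext (by simp [hadj])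
  rw [e]
  exact apply_dd σ p ⟨(j:ℕ)+1, hj⟩ hj1p hbj1

lemma lt_congr {α} [Preorder α] {a b a' b' : α} (h : a < b) (e1 : a = a') (e2 : b = b') :
    a' < b' := e1 ▸ e2 ▸ h

/-- Build a Baxter violation from explicit data. -/
lemma not_isBaxter_of' {m : ℕ} (π : Equiv.Perm (Fin m)) (i j k : ℕ)
    (hi : i < m) (hj0 : j < m) (hj : j + 1 < m) (hk : k < m)
    (hij : i < j) (hjk : j < k) (v1 v2 v3 v4 : Fin m)
    (e1 : π ⟨i, hi⟩ = v1) (e2 : π ⟨j, hj0⟩ = v2) (e3 : π ⟨j+1, hj⟩ = v3)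
    (e4 : π ⟨k, hk⟩ = v4)
    (hpat : (v3 < v1 ∧ v1 < v4 ∧ v4 < v2) ∨ (v2 < v4 ∧ v4 < v1 ∧ v1 < v3)) :
    ¬ IsBaxter π := by
  intro hb
  refine hb ⟨⟨i, hi⟩, ⟨j, hj0⟩, ⟨k, hk⟩, hj, Fin.mk_lt_mk.mpr hij, Fin.mk_lt_mk.mpr hjk, ?_⟩
  rw [e1, e2, e4]
  rcases hpat with ⟨a1, a2, a3⟩ | ⟨a1, a2, a3⟩
  · exact Or.inl ⟨lt_of_eq_of_lt e3 a1, a2, a3⟩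
  · exact Or.inr ⟨a1, a2, lt_of_lt_of_eq a3 e3.symm⟩

/-- Bad configuration: inserting at `p = j` yields a 2-41-3 pattern. -/
def CondB (σ : Equiv.Perm (Fin n)) (p : Fin (n+1)) : Prop :=
  ∃ (hp : (p:ℕ) < n) (a c : Fin n), (a:ℕ) < (p:ℕ) ∧ (p:ℕ) < (c:ℕ) ∧
    σ ⟨(p:ℕ), hp⟩ < σ a ∧ σ a < σ c

/-- Bad configuration: inserting at `p = j+1` yields a 3-14-2 pattern. -/
def CondC (σ : Equiv.Perm (Fin n)) (p : Fin (n+1)) : Prop :=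
  ∃ (q a c : Fin n), (q:ℕ)+1 = (p:ℕ) ∧ a < q ∧ q < c ∧
    σ q < σ c ∧ σ c < σ a

lemma notBaxter_of_B {σ : Equiv.Perm (Fin n)} {p : Fin (n+1)} (h : CondB σ p) :
    ¬ IsBaxter (insertMax σ p) := by
  obtain ⟨hp, a, c, hap, hpc, h1, h2⟩ := h
  have hcn : (c:ℕ) < n := c.isLt
  refine not_isBaxter_of' (insertMax σ p) (a:ℕ) (p:ℕ) ((c:ℕ)+1)
    (by omega) (by omega) (by omega) (by omega) hap (by omega)
    ((σ a).castSucc) (Fin.last n) ((σ ⟨(p:ℕ), hp⟩).castSucc) ((σ c).castSucc)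
    (apply_low σ p _ a rfl hap) ?_
    (apply_high σ p _ ⟨(p:ℕ), hp⟩ rfl (le_refl _))
    (apply_high σ p _ c rfl (by omega))
    (Or.inl ⟨Fin.castSucc_lt_castSucc_iff.mpr h1,
      Fin.castSucc_lt_castSucc_iff.mpr h2, Fin.castSucc_lt_last _⟩)
  have hep : (⟨(p:ℕ), by omega⟩ : Fin (n+1)) = p := Fin.ext rfl
  rw [hep, insertMax_self]

lemma notBaxter_of_C {σ : Equiv.Perm (Fin n)} {p : Fin (n+1)} (h : CondC σ p) :
    ¬ IsBaxter (insertMax σ p) := by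
  obtain ⟨q, a, c, hqp, haq, hqc, h1, h2⟩ := h
  have hcn : (c:ℕ) < n := c.isLt
  have haq' : (a:ℕ) < (q:ℕ) := haq
  have hqc' : (q:ℕ) < (c:ℕ) := hqc
  refine not_isBaxter_of' (insertMax σ p) (a:ℕ) (q:ℕ) ((c:ℕ)+1)
    (by omega) (by omega) (by omega) (by omega) haq' (by omega)
    ((σ a).castSucc) ((σ q).castSucc) (Fin.last n) ((σ c).castSucc)
    (apply_low σ p _ a rfl (by omega)) (apply_low σ p _ q rfl (by omega)) ?_
    (apply_high σ p _ c rfl (by omega))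
    (Or.inr ⟨Fin.castSucc_lt_castSucc_iff.mpr h1,
      Fin.castSucc_lt_castSucc_iff.mpr h2, Fin.castSucc_lt_last _⟩)
  have hep : (⟨(q:ℕ)+1, by omega⟩ : Fin (n+1)) = p := Fin.ext hqp
  rw [hep, insertMax_self]

lemma decompose (σ : Equiv.Perm (Fin n)) (p : Fin (n+1))
    (h : ¬ IsBaxter (insertMax σ p)) :
    ¬ IsBaxter σ ∨ CondB σ p ∨ CondC σ p := by
  simp only [IsBaxter, not_not] at h
  obtain ⟨i, j, k, hj, hij, hjk, hpat⟩ := h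
  have hij' : (i:ℕ) < (j:ℕ) := hij
  have hjk' : (j:ℕ) < (k:ℕ) := hjk
  have hne : ∀ x y : Fin (n+1), insertMax σ p x < insertMax σ p y → (x:ℕ) ≠ (p:ℕ) := by
    intro x y hxy hxp
    have hx : x = p := Fin.ext hxp
    rw [hx, insertMax_self] at hxy
    exact absurd hxy (Fin.not_lt.mpr (Fin.le_last _))
  rcases hpat with ⟨h1, h2, h3⟩ | ⟨h1, h2, h3⟩
  · -- π(j+1) < π(i) < π(k) < π(j)
    have hip : (i:ℕ) ≠ (p:ℕ) := hne i k h2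
    have hkp : (k:ℕ) ≠ (p:ℕ) := hne k j h3
    have hj1p : (j:ℕ)+1 ≠ (p:ℕ) := hne ⟨(j:ℕ)+1, hj⟩ i h1
    by_cases hjp : (j:ℕ) = (p:ℕ)
    · right; left
      have hp : (p:ℕ) < n := by omega
      have hkj1 : (k:ℕ) ≠ (j:ℕ)+1 := by
        intro he
        have hke : k = ⟨(j:ℕ)+1, hj⟩ := Fin.ext he
        rw [hke] at h2
        exact absurd (lt_trans h1 h2) (lt_irrefl _)
      have e1 : insertMax σ p ⟨(j:ℕ)+1, hj⟩ = (σ ⟨(p:ℕ), hp⟩).castSucc :=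
        apply_high σ p _ _ (by simp [hjp]) (le_refl _)
      have e2 : insertMax σ p i = (σ ⟨(i:ℕ), by omega⟩).castSucc :=
        apply_low σ p i _ rfl (by show (i:ℕ) < (p:ℕ); omega)
      have e3 : insertMax σ p k = (σ ⟨(k:ℕ)-1, by omega⟩).castSucc :=
        apply_high σ p k _ (by show (k:ℕ) = (k:ℕ)-1+1; omega) (by show (p:ℕ) ≤ (k:ℕ)-1; omega)
      exact ⟨hp, ⟨(i:ℕ), by omega⟩, ⟨(k:ℕ)-1, by omega⟩, (by show (i:ℕ) < (p:ℕ); omega),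
        (by show (p:ℕ) < (k:ℕ)-1; omega),
        Fin.castSucc_lt_castSucc_iff.mp (lt_congr h1 e1 e2),
        Fin.castSucc_lt_castSucc_iff.mp (lt_congr h2 e2 e3)⟩
    · left
      obtain ⟨i', j', k', hj', hij2, hjk2, e1, e2, e3, e4⟩ :=
        descend σ p i j k hj hip hjp hj1p hkp hij' hjk'
      exact fun hb => hb ⟨i', j', k', hj', Fin.mk_lt_mk.mpr hij2, Fin.mk_lt_mk.mpr hjk2,
        Or.inl ⟨Fin.castSucc_lt_castSucc_iff.mp (lt_congr h1 e3 e1),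
          Fin.castSucc_lt_castSucc_iff.mp (lt_congr h2 e1 e4),
          Fin.castSucc_lt_castSucc_iff.mp (lt_congr h3 e4 e2)⟩⟩
  · -- π(j) < π(k) < π(i) < π(j+1)
    have hip : (i:ℕ) ≠ (p:ℕ) := hne i ⟨(j:ℕ)+1, hj⟩ h3
    have hkp : (k:ℕ) ≠ (p:ℕ) := hne k i h2
    have hjp : (j:ℕ) ≠ (p:ℕ) := hne j k h1
    by_cases hj1p : (j:ℕ)+1 = (p:ℕ)
    · right; right
      have hjn : (j:ℕ) < n := by have := p.isLt; omega
      have hkj1 : (k:ℕ) ≠ (j:ℕ)+1 := by omega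
      have e1 : insertMax σ p i = (σ ⟨(i:ℕ), by omega⟩).castSucc :=
        apply_low σ p i _ rfl (by show (i:ℕ) < (p:ℕ); omega)
      have e2 : insertMax σ p j = (σ ⟨(j:ℕ), hjn⟩).castSucc :=
        apply_low σ p j _ rfl (by show (j:ℕ) < (p:ℕ); omega)
      have e3 : insertMax σ p k = (σ ⟨(k:ℕ)-1, by omega⟩).castSucc :=
        apply_high σ p k _ (by show (k:ℕ) = (k:ℕ)-1+1; omega) (by show (p:ℕ) ≤ (k:ℕ)-1; omega)
      exact ⟨⟨(j:ℕ), hjn⟩, ⟨(i:ℕ), by omega⟩, ⟨(k:ℕ)-1, by omega⟩, hj1p,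
        Fin.mk_lt_mk.mpr (by omega), Fin.mk_lt_mk.mpr (by show (j:ℕ) < (k:ℕ)-1; omega),
        Fin.castSucc_lt_castSucc_iff.mp (lt_congr h1 e2 e3),
        Fin.castSucc_lt_castSucc_iff.mp (lt_congr h2 e3 e1)⟩
    · left
      obtain ⟨i', j', k', hj', hij2, hjk2, e1, e2, e3, e4⟩ :=
        descend σ p i j k hj hip hjp hj1p hkp hij' hjk'
      exact fun hb => hb ⟨i', j', k', hj', Fin.mk_lt_mk.mpr hij2, Fin.mk_lt_mk.mpr hjk2,
        Or.inr ⟨Fin.castSucc_lt_castSucc_iff.mp (lt_congr h1 e2 e4),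
          Fin.castSucc_lt_castSucc_iff.mp (lt_congr h2 e4 e1),
          Fin.castSucc_lt_castSucc_iff.mp (lt_congr h3 e1 e3)⟩⟩

lemma cond_notB (σ : Equiv.Perm (Fin n)) (p : Fin (n+1)) (hσ : IsBaxter σ)
    (hc : (∃ q : Fin n, p = q.castSucc ∧ IsLRMax σ q) ∨
      (∃ q : Fin n, p = q.succ ∧ IsRLMax σ q)) :
    ¬ CondB σ p := by
  rintro ⟨hp, a, c, hap, hpc, h1, h2⟩
  rcases hc with ⟨q, hpq, hq⟩ | ⟨q, hpq, hq⟩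
  · have hpq' : (p:ℕ) = (q:ℕ) := by rw [hpq]; simp
    have he : (⟨(p:ℕ), hp⟩ : Fin n) = q := Fin.ext hpq'
    have hlt : σ a < σ q := hq a (Fin.lt_def.mpr (by omega))
    rw [he] at h1
    exact absurd h1 (not_lt.mpr (le_of_lt hlt))
  · have hpq' : (p:ℕ) = (q:ℕ)+1 := by rw [hpq]; simp
    have hqc : σ c < σ q := hq c (Fin.lt_def.mpr (by omega))
    have haq : (a:ℕ) ≠ (q:ℕ) := by
      intro he
      have hae : a = q := Fin.ext he
      rw [hae] at h2
      exact absurd (lt_trans h2 hqc) (lt_irrefl _)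
    exact absurd hσ (not_isBaxter_of' σ (a:ℕ) (q:ℕ) (c:ℕ) a.isLt q.isLt (by omega) c.isLt
      (by omega) (by omega) (σ a) (σ q) (σ ⟨(p:ℕ), hp⟩) (σ c) rfl rfl
      (congrArg σ (Fin.ext (by show (q:ℕ)+1 = (p:ℕ); omega))) rfl
      (Or.inl ⟨h1, h2, hqc⟩))

lemma cond_notC (σ : Equiv.Perm (Fin n)) (p : Fin (n+1)) (hσ : IsBaxter σ)
    (hc : (∃ q : Fin n, p = q.castSucc ∧ IsLRMax σ q) ∨
      (∃ q : Fin n, p = q.succ ∧ IsRLMax σ q)) :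
    ¬ CondC σ p := by
  rintro ⟨q', a, c, hq'p, haq', hq'c, h1, h2⟩
  have haq'' : (a:ℕ) < (q':ℕ) := haq'
  have hq'c' : (q':ℕ) < (c:ℕ) := hq'c
  rcases hc with ⟨q, hpq, hq⟩ | ⟨q, hpq, hq⟩
  · have hpq' : (p:ℕ) = (q:ℕ) := by rw [hpq]; simp
    have hqn : (q:ℕ) < n := q.isLt
    have ha : σ a < σ q := hq a (Fin.lt_def.mpr (by omega))
    exact absurd hσ (not_isBaxter_of' σ (a:ℕ) (q':ℕ) (c:ℕ) a.isLt q'.isLt (by omega) c.isLt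
      haq'' hq'c' (σ a) (σ q') (σ q) (σ c) rfl rfl
      (congrArg σ (Fin.ext (by show (q':ℕ)+1 = (q:ℕ); omega))) rfl
      (Or.inr ⟨h1, h2, ha⟩))
  · have hpq' : (p:ℕ) = (q:ℕ)+1 := by rw [hpq]; simp
    have he : q' = q := Fin.ext (by omega)
    rw [he] at h1
    have := hq c (Fin.lt_def.mpr (by omega))
    exact absurd (lt_trans h1 this) (lt_irrefl _)

lemma notcond (hn : 1 ≤ n) (σ : Equiv.Perm (Fin n)) (p : Fin (n+1))
    (h : ¬ ((∃ q : Fin n, p = q.castSucc ∧ IsLRMax σ q) ∨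
      (∃ q : Fin n, p = q.succ ∧ IsRLMax σ q))) :
    CondB σ p ∨ CondC σ p := by
  push_neg at h
  obtain ⟨hL, hR⟩ := h
  have hp0 : (p:ℕ) ≠ 0 := by
    intro h0
    refine hL ⟨0, hn⟩ (Fin.ext (by simp [h0])) ?_
    intro j hj
    exact absurd hj (by simp [Fin.lt_def])
  have hpn : (p:ℕ) ≠ n := by
    intro h0
    refine hR ⟨n-1, by omega⟩ (Fin.ext (by simp; omega)) ?_
    intro j hj
    have := j.isLt
    rw [Fin.lt_def] at hj
    simp at hj
    omega
  have hplt : (p:ℕ) < n := by have := p.isLt; omega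
  have h1p : 1 ≤ (p:ℕ) := by omega
  set p' : Fin n := ⟨(p:ℕ), hplt⟩ with hp'def
  set q : Fin n := ⟨(p:ℕ)-1, by omega⟩ with hqdef
  have hqv : (q:ℕ) = (p:ℕ)-1 := rfl
  have hLp := hL p' (Fin.ext (by simp [hp'def]))
  have hRq := hR q (Fin.ext (by simp [hqdef]; omega))
  rw [IsLRMax] at hLp
  push_neg at hLp
  obtain ⟨a, hap', ha⟩ := hLp
  have hap : (a:ℕ) < (p:ℕ) := hap'
  have ha' : σ p' < σ a :=
    lt_of_le_of_ne ha (fun e => absurd (σ.injective e) (by intro he; rw [he] at hap'; exact lt_irrefl _ hap'))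
  rw [IsRLMax] at hRq
  push_neg at hRq
  obtain ⟨b, hqb, hb⟩ := hRq
  have hqb' : (q:ℕ) < (b:ℕ) := hqb
  have hb' : σ q < σ b :=
    lt_of_le_of_ne hb (fun e => absurd (σ.injective e) (by intro he; rw [he] at hqb'; exact lt_irrefl _ hqb'))
  obtain ⟨k, hkmem, hkmax⟩ := Finset.exists_max_image
    (Finset.univ.filter (fun x : Fin n => (p:ℕ) ≤ (x:ℕ))) σ
    ⟨p', by simp [hp'def]⟩
  have hkp : (p:ℕ) ≤ (k:ℕ) := by simpa using hkmem
  have hbk : σ b ≤ σ k := hkmax b (by simp [hqdef] at hqb' ⊢; omega)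
  have hqk : σ q < σ k := lt_of_lt_of_le hb' hbk
  have hpk : σ p' ≤ σ k := hkmax p' (by simp [hp'def])
  have hakne : σ a ≠ σ k := fun e => by
    have : a = k := σ.injective e
    rw [this] at hap
    omega
  rcases lt_or_gt_of_ne hakne with hak | hka
  · -- CondB
    have hpk' : (p:ℕ) < (k:ℕ) := by
      rcases Nat.lt_or_ge (p:ℕ) (k:ℕ) with h' | h'
      · exact h'
      · exfalso
        have : k = p' := Fin.ext (by simp [hp'def]; omega)
        rw [this] at hak
        exact absurd (lt_trans ha' hak) (lt_irrefl _)
    exact Or.inl ⟨hplt, a, k, hap, hpk', ha', hak⟩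
  · -- CondC
    have haqne : (a:ℕ) ≠ (q:ℕ) := by
      intro he
      have hae : a = q := Fin.ext he
      rw [hae] at hka
      exact absurd (lt_trans hqk hka) (lt_irrefl _)
    exact Or.inr ⟨q, a, k, by omega, Fin.lt_def.mpr (by omega),
      Fin.lt_def.mpr (by omega), hqk, hka⟩

end InsertBaxterAux

theorem insert_baxter_iff {n : ℕ} (hn : 1 ≤ n) (σ : Equiv.Perm (Fin n))
    (hσ : IsBaxter σ) (p : Fin (n + 1)) :
    IsBaxter (insertMax σ p) ↔
      (∃ q : Fin n, p = q.castSucc ∧ IsLRMax σ q) ∨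
      (∃ q : Fin n, p = q.succ ∧ IsRLMax σ q) := by
  constructor
  · intro hB
    by_contra hc
    rcases InsertBaxterAux.notcond hn σ p hc with h | h
    · exact InsertBaxterAux.notBaxter_of_B h hB
    · exact InsertBaxterAux.notBaxter_of_C h hB
  · intro hc
    by_contra hB
    rcases InsertBaxterAux.decompose σ p hB with h | h | h
    · exact h hσ
    · exact InsertBaxterAux.cond_notB σ p hσ hc h
    · exact InsertBaxterAux.cond_notC σ p hσ hc h
end

section
/- Let σ be a Baxter permutation of size n with i left-to-right maxima and j right-to-left maxima. If π = L_k(σ) is obtained by inserting n+1 just before the k-th left-to-right maximum of σ (counting from the left), then π has exactly k left-to-right maxima and j+1 right-to-left maxima. -/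
lemma insertMax_self {n : ℕ} (σ : Equiv.Perm (Fin n)) (p : Fin (n+1)) :
    insertMax σ p p = Fin.last n := by
  simp [insertMax]

lemma insertMax_succAbove {n : ℕ} (σ : Equiv.Perm (Fin n)) (p : Fin (n+1)) (i : Fin n) :
    insertMax σ p (p.succAbove i) = (σ i).castSucc := by
  simp [insertMax, finSuccEquiv'_succAbove, Fin.succAbove_last]

theorem lk_insertion_maxima {n : ℕ} (σ : Equiv.Perm (Fin n)) (hσ : IsBaxter σ)
    (i j k : ℕ)
    (hi : i = {r : Fin n | IsLRMax σ r}.ncard)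
    (hj : j = {r : Fin n | IsRLMax σ r}.ncard)
    (q : Fin n) (hq : IsLRMax σ q)
    (hk : k = {r : Fin n | IsLRMax σ r ∧ r ≤ q}.ncard) :
    {r : Fin (n + 1) | IsLRMax (insertMax σ q.castSucc) r}.ncard = k ∧
    {r : Fin (n + 1) | IsRLMax (insertMax σ q.castSucc) r}.ncard = j + 1 := by
  subst hj hk
  set π := insertMax σ q.castSucc with hπ
  have hself : π q.castSucc = Fin.last n := insertMax_self σ _
  have hlt : ∀ m : Fin n, m < q → π m.castSucc = (σ m).castSucc := by
    intro m hm
    have h : (q.castSucc : Fin (n+1)).succAbove m = m.castSucc :=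
      Fin.succAbove_of_castSucc_lt _ _ (by simpa using hm)
    rw [← h]; exact insertMax_succAbove σ _ m
  have hge : ∀ m : Fin n, q ≤ m → π m.succ = (σ m).castSucc := by
    intro m hm
    have h : (q.castSucc : Fin (n+1)).succAbove m = m.succ :=
      Fin.succAbove_of_le_castSucc _ _ (by simpa using hm)
    rw [← h]; exact insertMax_succAbove σ _ m
  have hne_last : ∀ r : Fin (n+1), r ≠ q.castSucc → π r < Fin.last n := by
    intro r hr
    have h1 : π r ≠ Fin.last n := fun h => hr (π.injective (h.trans hself.symm))
    exact lt_of_le_of_ne (Fin.le_last _) h1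
  -- decomposition of positions
  have decomp_lt : ∀ r : Fin (n+1), r < q.castSucc →
      ∃ m : Fin n, m < q ∧ r = m.castSucc := by
    intro r hr
    have hrn : (r : ℕ) < n := lt_trans (by simpa [Fin.lt_def] using hr) q.isLt
    exact ⟨⟨r, hrn⟩, by simpa [Fin.lt_def] using hr, by ext; simp⟩
  have decomp_gt : ∀ r : Fin (n+1), q.castSucc < r →
      ∃ m : Fin n, q ≤ m ∧ r = m.succ := by
    intro r hr
    have h1 : (q : ℕ) < (r : ℕ) := by simpa [Fin.lt_def] using hr
    have hrn : (r : ℕ) - 1 < n := by have := q.isLt; omega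
    refine ⟨⟨(r : ℕ) - 1, hrn⟩, ?_, ?_⟩
    · simp only [Fin.le_def]; omega
    · ext; simp; omega
  constructor
  · -- LR maxima
    have hset : {r : Fin (n+1) | IsLRMax π r}
        = Fin.castSucc '' {r : Fin n | IsLRMax σ r ∧ r ≤ q} := by
      ext r
      simp only [Set.mem_setOf_eq, Set.mem_image]
      constructor
      · intro hr
        have hrle : r ≤ q.castSucc := by
          by_contra h
          push_neg at h
          have := hr q.castSucc h
          exact absurd (hne_last r (ne_of_gt h)) (by rw [hself] at this; exact not_lt.2 this.le)
        rcases lt_or_eq_of_le hrle with hlt' | heq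
        · obtain ⟨m, hmq, rfl⟩ := decomp_lt r hlt'
          refine ⟨m, ⟨?_, hmq.le⟩, rfl⟩
          intro a ha
          have h1 := hr a.castSucc (by simpa using ha)
          rw [hlt a (ha.trans hmq), hlt m hmq] at h1
          simpa using h1
        · exact ⟨q, ⟨hq, le_rfl⟩, heq.symm⟩
      · rintro ⟨m, ⟨hm, hmq⟩, rfl⟩
        intro a ha
        rcases lt_or_eq_of_le hmq with hmq' | rfl
        · obtain ⟨b, hbq, rfl⟩ := decomp_lt a (ha.trans (by simpa using hmq'))
          rw [hlt b hbq, hlt m hmq']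
          exact_mod_cast hm b (by simpa using ha)
        · rw [hself]
          exact hne_last a (ne_of_lt ha)
    rw [hset, Set.ncard_image_of_injective _ (Fin.castSucc_injective n)]
  · -- RL maxima
    have hRLge : ∀ m : Fin n, IsRLMax σ m → q ≤ m := by
      intro m hm
      by_contra h
      push_neg at h
      exact absurd (hq m h) (not_lt.2 (hm q h).le)
    have hset : {r : Fin (n+1) | IsRLMax π r}
        = insert q.castSucc (Fin.succ '' {r : Fin n | IsRLMax σ r}) := by
      ext r
      simp only [Set.mem_setOf_eq, Set.mem_insert_iff, Set.mem_image]
      constructor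
      · intro hr
        rcases lt_trichotomy r q.castSucc with h1 | h1 | h1
        · exfalso
          have := hr q.castSucc h1
          rw [hself] at this
          exact absurd (hne_last r (ne_of_lt h1)) (not_lt.2 this.le)
        · exact Or.inl h1
        · obtain ⟨m, hqm, rfl⟩ := decomp_gt r h1
          refine Or.inr ⟨m, ?_, rfl⟩
          intro a ha
          have h2 := hr a.succ (by simpa using ha)
          rw [hge a (hqm.trans ha.le), hge m hqm] at h2
          simpa using h2
      · rintro (rfl | ⟨m, hm, rfl⟩)
        · intro a ha
          rw [hself]
          exact hne_last a (ne_of_gt ha)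
        · intro a ha
          have hqm := hRLge m hm
          have haq : q.castSucc < a := by
            have h1 : (m : ℕ) + 1 < (a : ℕ) := by simpa [Fin.lt_def] using ha
            have h2 : (q : ℕ) ≤ (m : ℕ) := hqm
            simp only [Fin.lt_def, Fin.coe_castSucc]
            omega
          obtain ⟨b, hqb, rfl⟩ := decomp_gt a haq
          rw [hge b hqb, hge m hqm]
          have hmb : m < b := by simpa using ha
          exact_mod_cast hm b hmb
    have hnm : q.castSucc ∉ Fin.succ '' {r : Fin n | IsRLMax σ r} := by
      rintro ⟨m, hm, hme⟩
      have hqm := hRLge m hm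
      have : (q : ℕ) = (m : ℕ) + 1 := by
        have := congrArg Fin.val hme
        simpa using this.symm
      omega
    rw [hset, Set.ncard_insert_of_notMem hnm,
      Set.ncard_image_of_injective _ (Fin.succ_injective n)]
end

section
/- Let σ be a Baxter permutation of size n with i left-to-right maxima and j right-to-left maxima. If π = R_k(σ) is obtained by inserting n+1 just after the k-th right-to-left maximum of σ (counting from the right), then π has exactly i+1 left-to-right maxima and k right-to-left maxima. -/
lemma insertMax_apply_self {n : ℕ} (σ : Equiv.Perm (Fin n)) (p : Fin (n + 1)) :
    insertMax σ p p = Fin.last n := by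
  simp [insertMax, finSuccEquiv'_at]

lemma insertMax_apply_succAbove {n : ℕ} (σ : Equiv.Perm (Fin n)) (p : Fin (n + 1))
    (s : Fin n) : insertMax σ p (p.succAbove s) = (σ s).castSucc := by
  simp [insertMax, finSuccEquiv'_succAbove, finSuccEquiv'_symm_some, Fin.succAbove_last]

theorem rk_insertion_maxima {n : ℕ} (σ : Equiv.Perm (Fin n)) (hσ : IsBaxter σ)
    (i j k : ℕ)
    (hi : i = {r : Fin n | IsLRMax σ r}.ncard)
    (hj : j = {r : Fin n | IsRLMax σ r}.ncard)
    (q : Fin n) (hq : IsRLMax σ q)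
    (hk : k = {r : Fin n | IsRLMax σ r ∧ q ≤ r}.ncard) :
    {r : Fin (n + 1) | IsLRMax (insertMax σ q.succ) r}.ncard = i + 1 ∧
    {r : Fin (n + 1) | IsRLMax (insertMax σ q.succ) r}.ncard = k := by
  set p : Fin (n + 1) := q.succ with hp
  set π := insertMax σ q.succ with hπ
  have hself : π p = Fin.last n := insertMax_apply_self σ p
  have habove : ∀ s : Fin n, π (p.succAbove s) = (σ s).castSucc :=
    insertMax_apply_succAbove σ p
  -- every LR max of σ is ≤ q
  have hLRle : ∀ s : Fin n, IsLRMax σ s → s ≤ q := by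
    intro s hs
    by_contra h
    push_neg at h
    exact absurd (hs q h) (not_lt.2 (hq s h).le)
  constructor
  · -- LR maxima
    have hset : {r : Fin (n + 1) | IsLRMax π r}
        = insert p ((p.succAbove) '' {s : Fin n | IsLRMax σ s}) := by
      ext r
      simp only [Set.mem_setOf_eq, Set.mem_insert_iff, Set.mem_image]
      constructor
      · intro hr
        rcases eq_or_ne r p with h | h
        · exact Or.inl h
        · obtain ⟨s, rfl⟩ := Fin.exists_succAbove_eq h
          refine Or.inr ⟨s, ?_, rfl⟩
          intro t ht
          have := hr (p.succAbove t) (Fin.succAbove_lt_succAbove_iff.2 ht)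
          rw [habove, habove] at this
          exact Fin.castSucc_lt_castSucc_iff.1 this
      · rintro (rfl | ⟨s, hs, rfl⟩)
        · intro t ht
          rcases eq_or_ne t p with rfl | h
          · exact absurd ht (lt_irrefl p)
          · obtain ⟨u, rfl⟩ := Fin.exists_succAbove_eq h
            rw [habove, hself]
            exact Fin.castSucc_lt_last _
        · intro t ht
          have hsq : s ≤ q := hLRle s hs
          have hcs : s.castSucc < p := by
            rw [hp]; exact Fin.castSucc_lt_succ_iff.2 hsq
          have hlt : p.succAbove s < p := by
            rw [Fin.succAbove_of_castSucc_lt _ _ hcs]; exact hcs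
          have htp : t ≠ p := ne_of_lt (ht.trans hlt)
          obtain ⟨u, rfl⟩ := Fin.exists_succAbove_eq htp
          rw [habove, habove]
          exact Fin.castSucc_lt_castSucc_iff.2 (hs u (Fin.succAbove_lt_succAbove_iff.1 ht))
    have hnm : p ∉ (p.succAbove) '' {s : Fin n | IsLRMax σ s} := by
      rintro ⟨s, _, hs⟩
      exact Fin.succAbove_ne p s hs
    rw [hset, Set.ncard_insert_of_notMem hnm (Set.toFinite _),
      Set.ncard_image_of_injective _ (Fin.succAbove_right_injective), hi]
  · -- RL maxima
    have hset : {r : Fin (n + 1) | IsRLMax π r}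
        = Fin.succ '' {s : Fin n | IsRLMax σ s ∧ q ≤ s} := by
      ext r
      simp only [Set.mem_setOf_eq, Set.mem_image]
      constructor
      · intro hr
        have hpr : p ≤ r := by
          by_contra h
          push_neg at h
          have := hr p h
          rw [hself] at this
          exact absurd this (not_lt.2 (Fin.le_last _))
        rcases eq_or_lt_of_le hpr with h | h
        · exact ⟨q, ⟨hq, le_refl q⟩, h⟩
        · obtain ⟨t, rfl⟩ := Fin.exists_succAbove_eq (ne_of_gt h)
          have hqt : q < t := by
            by_contra hc
            push_neg at hc
            have hcs : t.castSucc < p := by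
              rw [hp]; exact Fin.castSucc_lt_succ_iff.2 hc
            rw [Fin.succAbove_of_castSucc_lt _ _ hcs] at h
            exact absurd h (not_lt.2 hcs.le)
          have hteq : p.succAbove t = t.succ := by
            apply Fin.succAbove_of_le_castSucc
            rw [hp]
            exact Fin.succ_le_castSucc_iff.2 hqt
          refine ⟨t, ⟨?_, hqt.le⟩, hteq.symm⟩
          intro u hu
          have := hr (p.succAbove u) (Fin.succAbove_lt_succAbove_iff.2 hu)
          rw [habove, habove] at this
          exact Fin.castSucc_lt_castSucc_iff.1 this
      · rintro ⟨s, ⟨hs, hqs⟩, rfl⟩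
        rcases eq_or_lt_of_le hqs with rfl | hqs'
        · -- s = q, s.succ = p
          intro t ht
          have htp : t ≠ p := ne_of_gt (by rw [hp]; exact ht)
          obtain ⟨u, rfl⟩ := Fin.exists_succAbove_eq htp
          rw [habove, show (Fin.succ q : Fin (n + 1)) = p from rfl, hself]
          exact Fin.castSucc_lt_last _
        · have hseq : p.succAbove s = s.succ := by
            apply Fin.succAbove_of_le_castSucc
            rw [hp]
            exact Fin.succ_le_castSucc_iff.2 hqs'
          intro t ht
          have hpt : p < t := lt_trans (by rw [hp]; exact Fin.succ_lt_succ_iff.2 hqs') ht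
          obtain ⟨u, rfl⟩ := Fin.exists_succAbove_eq (ne_of_gt hpt)
          rw [← hseq] at ht
          have hsu : s < u := Fin.succAbove_lt_succAbove_iff.1 ht
          rw [habove, ← hseq, habove]
          exact Fin.castSucc_lt_castSucc_iff.2 (hs u hsu)
    rw [hset, Set.ncard_image_of_injective _ (Fin.succ_injective n), hk]
end

section
/- If π is a Baxter permutation containing an occurrence of the pattern 2413 that is minimal (its bounding rectangle contains no other occurrence of 2413), given by positions i₁<i₂<i₃<i₄ with π(i₃)<π(i₁)<π(i₄)<π(i₂), then there is no index i with i₁ < i < i₂ such that π(i₃) ≤ π(i) ≤ π(i₂), and no index i with i₃ < i < i₄ such that π(i₃) ≤ π(i) ≤ π(i₂), and no index i with i₁ ≤ i ≤ i₄ such that π(i₃) < π(i) < π(i₁), and no index i with i₁ ≤ i ≤ i₄ such that π(i₄) < π(i) < π(i₂). -/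
theorem minimal_2413_empty_regions {n : ℕ} (π : Equiv.Perm (Fin n))
    (hπ : IsBaxter π) (i₁ i₂ i₃ i₄ : Fin n)
    (h12 : i₁ < i₂) (h23 : i₂ < i₃) (h34 : i₃ < i₄)
    (hv31 : π i₃ < π i₁) (hv14 : π i₁ < π i₄) (hv42 : π i₄ < π i₂)
    (hmin : ∀ j₁ j₂ j₃ j₄ : Fin n,
      (i₁ ≤ j₁ ∧ j₁ ≤ i₄ ∧ π i₃ ≤ π j₁ ∧ π j₁ ≤ π i₂) →
      (i₁ ≤ j₂ ∧ j₂ ≤ i₄ ∧ π i₃ ≤ π j₂ ∧ π j₂ ≤ π i₂) →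
      (i₁ ≤ j₃ ∧ j₃ ≤ i₄ ∧ π i₃ ≤ π j₃ ∧ π j₃ ≤ π i₂) →
      (i₁ ≤ j₄ ∧ j₄ ≤ i₄ ∧ π i₃ ≤ π j₄ ∧ π j₄ ≤ π i₂) →
      j₁ < j₂ → j₂ < j₃ → j₃ < j₄ →
      π j₃ < π j₁ → π j₁ < π j₄ → π j₄ < π j₂ →
      j₁ = i₁ ∧ j₂ = i₂ ∧ j₃ = i₃ ∧ j₄ = i₄) :
    (¬ ∃ i : Fin n, i₁ < i ∧ i < i₂ ∧ π i₃ ≤ π i ∧ π i ≤ π i₂) ∧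
    (¬ ∃ i : Fin n, i₃ < i ∧ i < i₄ ∧ π i₃ ≤ π i ∧ π i ≤ π i₂) ∧
    (¬ ∃ i : Fin n, i₁ ≤ i ∧ i ≤ i₄ ∧ π i₃ < π i ∧ π i < π i₁) ∧
    (¬ ∃ i : Fin n, i₁ ≤ i ∧ i ≤ i₄ ∧ π i₄ < π i ∧ π i < π i₂) := by
  have hv32 : π i₃ < π i₂ := hv31.trans (hv14.trans hv42)
  have R1 : i₁ ≤ i₁ ∧ i₁ ≤ i₄ ∧ π i₃ ≤ π i₁ ∧ π i₁ ≤ π i₂ :=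
    ⟨le_rfl, (h12.trans (h23.trans h34)).le, hv31.le, (hv14.trans hv42).le⟩
  have R2 : i₁ ≤ i₂ ∧ i₂ ≤ i₄ ∧ π i₃ ≤ π i₂ ∧ π i₂ ≤ π i₂ :=
    ⟨h12.le, (h23.trans h34).le, hv32.le, le_rfl⟩
  have R3 : i₁ ≤ i₃ ∧ i₃ ≤ i₄ ∧ π i₃ ≤ π i₃ ∧ π i₃ ≤ π i₂ :=
    ⟨(h12.trans h23).le, h34.le, le_rfl, hv32.le⟩
  have R4 : i₁ ≤ i₄ ∧ i₄ ≤ i₄ ∧ π i₃ ≤ π i₄ ∧ π i₄ ≤ π i₂ :=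
    ⟨(h12.trans (h23.trans h34)).le, le_rfl, (hv31.trans hv14).le, hv42.le⟩
  have inj : ∀ a b : Fin n, π a = π b → a = b := fun a b h => π.injective h
  have C1 : ¬ ∃ i : Fin n, i₁ < i ∧ i < i₂ ∧ π i₃ ≤ π i ∧ π i ≤ π i₂ := by
    rintro ⟨i, h1, h2, h3, h4⟩
    have hne3 : i ≠ i₃ := (h2.trans h23).ne
    have h3' : π i₃ < π i := lt_of_le_of_ne h3 (fun h => hne3 (inj _ _ h.symm))
    have hne4 : i ≠ i₄ := (h2.trans (h23.trans h34)).ne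
    have hRi : i₁ ≤ i ∧ i ≤ i₄ ∧ π i₃ ≤ π i ∧ π i ≤ π i₂ :=
      ⟨h1.le, (h2.trans (h23.trans h34)).le, h3, h4⟩
    rcases lt_or_gt_of_ne (fun h : π i = π i₄ => hne4 (inj _ _ h)) with hlt | hgt
    · exact absurd (hmin i i₂ i₃ i₄ hRi R2 R3 R4 h2 h23 h34 h3' hlt hv42).1 h1.ne'
    · exact absurd (hmin i₁ i i₃ i₄ R1 hRi R3 R4 h1 (h2.trans h23) h34 hv31 hv14 hgt).2.1
        h2.ne
  have C2 : ¬ ∃ i : Fin n, i₃ < i ∧ i < i₄ ∧ π i₃ ≤ π i ∧ π i ≤ π i₂ := by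
    rintro ⟨i, h1, h2, h3, h4⟩
    have hne2 : i ≠ i₂ := (h23.trans h1).ne'
    have h4' : π i < π i₂ := lt_of_le_of_ne h4 (fun h => hne2 (inj _ _ h))
    have hne1 : i ≠ i₁ := ((h12.trans h23).trans h1).ne'
    have hRi : i₁ ≤ i ∧ i ≤ i₄ ∧ π i₃ ≤ π i ∧ π i ≤ π i₂ :=
      ⟨((h12.trans h23).trans h1).le, h2.le, h3, h4⟩
    rcases lt_or_gt_of_ne (fun h : π i = π i₁ => hne1 (inj _ _ h)) with hlt | hgt
    · exact absurd (hmin i₁ i₂ i i₄ R1 R2 hRi R4 h12 (h23.trans h1) h2 hlt hv14 hv42).2.2.1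
        h1.ne'
    · exact absurd (hmin i₁ i₂ i₃ i R1 R2 R3 hRi h12 h23 h1 hv31 hgt h4').2.2.2 h2.ne
  refine ⟨C1, C2, ?_, ?_⟩
  · rintro ⟨i, h1, h2, h3, h4⟩
    have hne1 : i ≠ i₁ := fun h => absurd (h ▸ h4) (lt_irrefl _)
    have hne4 : i ≠ i₄ := fun h => absurd (h4.trans hv14) (by rw [h]; exact lt_irrefl _)
    have h1' : i₁ < i := lt_of_le_of_ne h1 (Ne.symm hne1)
    have h2' : i < i₄ := lt_of_le_of_ne h2 hne4
    have h4b : π i ≤ π i₂ := (h4.trans (hv14.trans hv42)).le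
    rcases lt_trichotomy i i₂ with hlt | heq | hgt
    · exact C1 ⟨i, h1', hlt, h3.le, h4b⟩
    · exact absurd (h4.trans (hv14.trans hv42)) (by rw [heq]; exact lt_irrefl _)
    · rcases lt_trichotomy i i₃ with hlt3 | heq3 | hgt3
      · have := hmin i₁ i₂ i i₄ R1 R2 ⟨h1, h2, h3.le, h4b⟩ R4 h12 hgt h2' h4 hv14 hv42
        exact absurd (this.2.2.1 ▸ h3) (lt_irrefl _)
      · exact absurd (heq3 ▸ h3) (lt_irrefl _)
      · exact C2 ⟨i, hgt3, h2', h3.le, h4b⟩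
  · rintro ⟨i, h1, h2, h3, h4⟩
    have hne1 : i ≠ i₁ := fun h => absurd (hv14.trans h3) (by rw [h]; exact lt_irrefl _)
    have hne4 : i ≠ i₄ := fun h => absurd (h ▸ h3) (lt_irrefl _)
    have h1' : i₁ < i := lt_of_le_of_ne h1 (Ne.symm hne1)
    have h2' : i < i₄ := lt_of_le_of_ne h2 hne4
    have h3b : π i₃ ≤ π i := ((hv31.trans hv14).trans h3).le
    rcases lt_trichotomy i i₂ with hlt | heq | hgt
    · exact C1 ⟨i, h1', hlt, h3b, h4.le⟩
    · exact absurd (heq ▸ h4) (lt_irrefl _)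
    · rcases lt_trichotomy i i₃ with hlt3 | heq3 | hgt3
      · have := hmin i₁ i i₃ i₄ R1 ⟨h1, h2, h3b, h4.le⟩ R3 R4 h1' hlt3 h34 hv31 hv14
          h3
        exact absurd (this.2.1 ▸ h4) (lt_irrefl _)
      · exact absurd ((hv31.trans hv14).trans (heq3 ▸ h3)) (lt_irrefl _)
      · exact C2 ⟨i, hgt3, h2', h3b, h4.le⟩
end
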